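/- arXiv:1403.8139 — 5 statements merged into one kernel-verified Lean document; each statement's English description precedes it below -/
import Mathlib

section
/- Let λ = (λ_1,…,λ_n) be a weakly decreasing tuple of nonnegative integers and ρ_n = (n−1,…,1,0). Then, as an identity in the field of rational functions over ℚ in the variables q, x_1,…,x_n, one has ∏_{1≤i<j≤n}(x_i − q x_j) · s_λ(x) = Σ_{T ∈ SGT(λ+ρ_n)} (1−q)^{z(T)} (−q)^{l(T)} x^{m(T)}. -/
open MvPolynomial Finset

noncomputable section

abbrev R0 (n : ℕ) : Type := MvPolynomial (Option (Fin n)) ℚ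

/-- The field of rational functions over `ℚ` in `q, x_1, …, x_n`
(the variable `none` is `q`, and `some i` is `x_{i+1}`). -/
abbrev F0 (n : ℕ) : Type := FractionRing (R0 n)

def q0 (n : ℕ) : F0 n := algebraMap (R0 n) (F0 n) (X none)

def x0 (n : ℕ) (i : Fin n) : F0 n := algebraMap (R0 n) (F0 n) (X (some i))

/-- The action of `σ ∈ S_n` on `F0 n`, permuting `x_1, …, x_n` and fixing `q`. -/
def pact0 (n : ℕ) (σ : Equiv.Perm (Fin n)) : F0 n →+* F0 n :=
  IsFractionRing.lift
    (g := (algebraMap (R0 n) (F0 n)).comp (rename (Equiv.optionCongr σ)).toRingHom)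
    (by
      rw [RingHom.coe_comp]
      exact (IsFractionRing.injective (R0 n) (F0 n)).comp
        (rename_injective _ (Equiv.injective _)))

/-- `ρ_n`, 0-indexed: `rho n i = n - 1 - i`. -/
def rho (n : ℕ) : Fin n → ℕ := fun i => n - 1 - i.val

/-- The deformed Weyl denominator `Δ_n(c) = ∏_{i<j} (x_i - c x_j)`. -/
def Delta0 (n : ℕ) (c : F0 n) : F0 n :=
  ∏ i : Fin n, ∏ j ∈ Finset.Ioi i, (x0 n i - c * x0 n j)

/-- The Schur polynomial `s_λ(x) = Σ_σ σ(x^{λ+ρ}/Δ_n)`. -/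
def Schur0 (n : ℕ) (lam : Fin n → ℕ) : F0 n :=
  ∑ σ : Equiv.Perm (Fin n), pact0 n σ
    ((∏ i : Fin n, x0 n i ^ (lam i + rho n i)) / Delta0 n 1)

noncomputable section

/-- Extend a tuple `Fin n → ℕ` by zero to all of `ℕ`. -/
def pad {n : ℕ} (f : Fin n → ℕ) : ℕ → ℕ := fun k => if h : k < n then f ⟨k, h⟩ else 0

/-- A Gelfand–Tsetlin pattern with `n` rows (0-indexed): the entries `τ i j` for
`i ≤ j < n` form the triangular array; all other values are `0`. -/
structure GTP (n : ℕ) where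
  τ : ℕ → ℕ → ℕ
  supp : ∀ i j, n ≤ j ∨ j < i → τ i j = 0
  dec : ∀ i j, i ≤ j → j + 1 < n → τ i (j + 1) ≤ τ i j
  interUp : ∀ i j, 1 ≤ i → i ≤ j → j < n → τ i j ≤ τ (i - 1) (j - 1)
  interLow : ∀ i j, 1 ≤ i → i ≤ j → j < n → τ (i - 1) j ≤ τ i j

/-- A GT pattern is strict if every row is strictly decreasing. -/
def GTP.Strict {n : ℕ} (T : GTP n) : Prop :=
  ∀ i j, i ≤ j → j + 1 < n → T.τ i (j + 1) < T.τ i j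

/-- The top row of `T` is `α`. -/
def GTP.TopRow {n : ℕ} (T : GTP n) (α : Fin n → ℕ) : Prop := ∀ j, T.τ 0 j = pad α j

/-- `|r_i|`, the sum of the entries of row `i`. -/
def rowsum {n : ℕ} (T : GTP n) (i : ℕ) : ℕ := ∑ j ∈ Finset.range n, T.τ i j

/-- `m_i(T) = |r_i| - |r_{i+1}|` (0-indexed). -/
def mstat {n : ℕ} (T : GTP n) (i : ℕ) : ℕ := rowsum T i - rowsum T (i + 1)

/-- The number of left-leaning entries of `T`. -/
def lcount {n : ℕ} (T : GTP n) : ℕ :=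
  ((Finset.range n ×ˢ Finset.range n).filter
    (fun p => 1 ≤ p.1 ∧ p.1 ≤ p.2 ∧ T.τ p.1 p.2 = T.τ (p.1 - 1) (p.2 - 1))).card

/-- The number of special entries of `T`. -/
def zcount {n : ℕ} (T : GTP n) : ℕ :=
  ((Finset.range n ×ˢ Finset.range n).filter
    (fun p => 1 ≤ p.1 ∧ p.1 ≤ p.2 ∧ T.τ p.1 p.2 ≠ T.τ (p.1 - 1) (p.2 - 1) ∧
      T.τ p.1 p.2 ≠ T.τ (p.1 - 1) p.2)).card

/-- Row `i` of `T`, as a tuple of (declared) length `k`. -/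
def rowF {n : ℕ} (T : GTP n) (i : ℕ) (k : ℕ) : Fin k → ℕ := fun j => T.τ i (i + j.val)

/-- `Ω(α)`: the smallest set of tuples containing `α` and closed under
elementary raising moves. -/
inductive Omega : {k : ℕ} → (Fin k → ℕ) → (Fin k → ℕ) → Prop
  | base {k : ℕ} (α : Fin k → ℕ) : Omega α α
  | step {k : ℕ} (α β : Fin k → ℕ) (i : ℕ) (hi : i + 1 < k) (hb : Omega α β)
      (h2 : β ⟨i, by omega⟩ = β ⟨i + 1, hi⟩ + 2) :
      Omega α (Function.update (Function.update β ⟨i, by omega⟩ (β ⟨i, by omega⟩ - 1))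
        ⟨i + 1, hi⟩ (β ⟨i + 1, hi⟩ + 1))

/-- `l(β) = Σ_{i=1}^{k-1} ((α_1 + ⋯ + α_i) - (β_1 + ⋯ + β_i))`. -/
def ell {k : ℕ} (α β : Fin k → ℕ) : ℤ :=
  ∑ i ∈ Finset.range (k - 1),
    ((∑ j ∈ Finset.range (i + 1), (pad α j : ℤ)) - ∑ j ∈ Finset.range (i + 1), (pad β j : ℤ))


/-- `x^{m(T)} = x_1^{m_1(T)} ⋯ x_n^{m_n(T)}`. -/
def xm0 (n : ℕ) (T : GTP n) : F0 n :=
  ∏ i : Fin n, x0 n i ^ (rowsum T i.val - rowsum T (i.val + 1))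

/-!
Multiplying by `Δ_n(1)` turns `s_λ` into the alternant `det (x_i ^ α_j)`, `α = λ + ρ_n`, so the
theorem becomes the polynomial identity
`Δ_n(q) · det (x_i ^ α_j) = Δ_n(1) · Σ_{T ∈ SGT(α)} (1-q)^{z(T)} (-q)^{l(T)} x^{m(T)}`,
which holds over any commutative ring and is proved by induction on `n`.

Column operations reduce the alternant to `x_1 ^ α_n` times an `(n-1) × (n-1)` determinant with
entries `x_i ^ α_{k+1} x_1 ^ (α_k - α_{k+1}) - x_i ^ α_k` (`i ≥ 2`). Multiplied by `x_1 - q x_i`,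
such an entry becomes `(x_1 - x_i) Σ_b c(b) x_1 ^ (α_k - b) x_i ^ b` over `α_{k+1} ≤ b ≤ α_k`,
where `c(b)` is `-q`, `1` or `1 - q` according as an entry `b` below `α_k` and `α_{k+1}` is
left-leaning, right-leaning or special. Expanding the determinant by multilinearity gives a sum
over all rows `β` interlacing `α` of alternants in `x_2, …, x_n`, which is exactly how a strict
GT pattern splits into its top row and the strict pattern below it (a row `β` with repeated
entries contributes zero on both sides).
-/

variable {R : Type*} [CommRing R]

section Alternant

variable {n : ℕ}

def weylDenom (q : R) (x : Fin n → R) : R :=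
  ∏ i : Fin n, ∏ j ∈ Ioi i, (x i - q * x j)

def alternant (x : Fin n → R) (α : Fin n → ℕ) : R :=
  (Matrix.of fun i j => x i ^ α j).det

theorem weylDenom_succ (q : R) (x : Fin (n + 1) → R) :
    weylDenom q x = (∏ i : Fin n, (x 0 - q * x i.succ)) * weylDenom q (x ∘ Fin.succ) := by
  simp only [weylDenom, Fin.prod_univ_succ, Fin.prod_Ioi_zero, Fin.prod_Ioi_succ,
    Function.comp_apply]

theorem weylDenom_one_comp_perm (x : Fin n → R) (σ : Equiv.Perm (Fin n)) :
    weylDenom 1 (x ∘ σ) = Equiv.Perm.sign σ * weylDenom 1 x := by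
  have hV : ∀ y : Fin n → R, weylDenom 1 y
      = (-1) ^ (∑ i : Fin n, #(Ioi i)) * (Matrix.vandermonde y).det := by
    intro y
    simp only [weylDenom, Matrix.det_vandermonde, ← prod_pow_eq_pow_sum, ← prod_mul_distrib,
      ← prod_const, one_mul]
    exact prod_congr rfl fun i _ => prod_congr rfl fun j _ => by ring
  rw [hV, hV, mul_left_comm, ← Matrix.det_permute]
  rfl

theorem alternant_eq_zero_of_not_injective (x : Fin n → R) {α : Fin n → ℕ}
    (hα : ¬ Function.Injective α) : alternant x α = 0 := by
  obtain ⟨k, l, hkl, hne⟩ : ∃ k l, α k = α l ∧ k ≠ l := by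
    simpa [Function.Injective] using hα
  exact Matrix.det_zero_of_column_eq hne fun i => by simp [hkl]

def subdiagonalUnipotent (c : Fin (n + 1) → Fin (n + 1) → R) :
    Matrix (Fin (n + 1)) (Fin (n + 1)) R :=
  Matrix.of fun j k => if j = k then 1 else if (j : ℕ) = k + 1 then -c j k else 0

theorem det_subdiagonalUnipotent (c : Fin (n + 1) → Fin (n + 1) → R) :
    (subdiagonalUnipotent c).det = 1 := by
  rw [Matrix.det_of_isLowerTriangular _ fun i j hij => ?_]
  · simp [subdiagonalUnipotent]
  · have : (i : ℕ) < j := OrderDual.toDual_lt_toDual.mp hij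
    simp only [subdiagonalUnipotent, Matrix.of_apply, Fin.ext_iff]
    rw [if_neg (by omega), if_neg (by omega)]

theorem mul_subdiagonalUnipotent_castSucc (M : Matrix (Fin (n + 1)) (Fin (n + 1)) R)
    (c : Fin (n + 1) → Fin (n + 1) → R) (i : Fin (n + 1)) (k : Fin n) :
    (M * subdiagonalUnipotent c) i k.castSucc
      = M i k.castSucc - c k.succ k.castSucc * M i k.succ := by
  rw [Matrix.mul_apply, Fintype.sum_eq_add k.castSucc k.succ (Fin.castSucc_lt_succ (i := k)).ne
    fun j hj => ?_]
  · simp [subdiagonalUnipotent, Fin.ext_iff]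
    ring
  · simp only [ne_eq, Fin.ext_iff, Fin.val_castSucc, Fin.val_succ] at hj
    simp only [subdiagonalUnipotent, Matrix.of_apply, Fin.ext_iff, Fin.val_castSucc]
    rw [if_neg hj.1, if_neg hj.2, mul_zero]

theorem mul_subdiagonalUnipotent_last (M : Matrix (Fin (n + 1)) (Fin (n + 1)) R)
    (c : Fin (n + 1) → Fin (n + 1) → R) (i : Fin (n + 1)) :
    (M * subdiagonalUnipotent c) i (Fin.last n) = M i (Fin.last n) := by
  rw [Matrix.mul_apply, Fintype.sum_eq_single (Fin.last n) fun j hj => ?_]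
  · simp [subdiagonalUnipotent]
  · simp only [ne_eq, Fin.ext_iff, Fin.val_last] at hj
    simp only [subdiagonalUnipotent, Matrix.of_apply, Fin.ext_iff, Fin.val_last]
    rw [if_neg hj, if_neg (by omega), mul_zero]

theorem alternant_eq_pow_mul_det (x : Fin (n + 1) → R) {α : Fin (n + 1) → ℕ}
    (hα : Antitone α) :
    alternant x α = x 0 ^ α (Fin.last n) * (Matrix.of fun i k : Fin n =>
      x i.succ ^ α k.succ * x 0 ^ (α k.castSucc - α k.succ) - x i.succ ^ α k.castSucc).det := by
  set N : Matrix (Fin n) (Fin n) R := Matrix.of fun i k =>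
    x i.succ ^ α k.succ * x 0 ^ (α k.castSucc - α k.succ) - x i.succ ^ α k.castSucc
  -- subtracting `x_1 ^ (α_k - α_{k+1})` times column `k + 1` from column `k` clears the first
  -- row except for its last entry
  set B := (Matrix.of fun i j => x i ^ α j) * subdiagonalUnipotent fun j k => x 0 ^ (α k - α j)
    with hB
  have hcol : ∀ i (k : Fin n), B i k.castSucc
      = x i ^ α k.castSucc - x 0 ^ (α k.castSucc - α k.succ) * x i ^ α k.succ := by
    intro i k
    rw [hB, mul_subdiagonalUnipotent_castSucc]
    rfl
  have hlast : B 0 (Fin.last n) = x 0 ^ α (Fin.last n) := by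
    rw [hB, mul_subdiagonalUnipotent_last]
    rfl
  have hrow_zero : ∀ k : Fin n, B 0 k.castSucc = 0 := by
    intro k
    rw [hcol, ← pow_add, Nat.sub_add_cancel (hα (Fin.castSucc_le_succ k)), sub_self]
  have hminor : B.submatrix Fin.succ (Fin.last n).succAbove = -N := by
    ext i k
    simp only [N, Fin.succAbove_last, Matrix.submatrix_apply, hcol, Matrix.neg_apply,
      Matrix.of_apply]
    ring
  have hdet : alternant x α = B.det := by
    rw [Matrix.det_mul, det_subdiagonalUnipotent, mul_one]
    rfl
  rw [hdet, Matrix.det_succ_row _ 0, Fin.sum_univ_castSucc]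
  simp only [hrow_zero, mul_zero, zero_mul, sum_const_zero, zero_add, hlast,
    Fin.succAbove_zero, hminor, Matrix.det_neg, Fintype.card_fin, Fin.val_zero, Fin.val_last]
  linear_combination x 0 ^ α (Fin.last n) * N.det *
    pow_mul_pow_eq_one n (by norm_num : (-1 : R) * -1 = 1)

theorem Matrix.det_of_sum_mul {m ι : Type*} [Fintype m] [DecidableEq m] [DecidableEq ι]
    (s : m → Finset ι) (c : m → ι → R) (v : ι → m → R) :
    (Matrix.of fun i k => ∑ b ∈ s k, c k b * v b i).det
      = ∑ r ∈ Fintype.piFinset s, (∏ k, c k (r k)) * (Matrix.of fun i k => v (r k) i).det := by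
  rw [← Matrix.det_transpose]
  have hcols : (Matrix.of fun i k => ∑ b ∈ s k, c k b * v b i).transpose
      = fun k => ∑ b ∈ s k, c k b • v b := by
    ext k i
    simp
  rw [Matrix.det, hcols]
  refine ((Matrix.detRowAlternating : (m → R) [⋀^m]→ₗ[R] R).toMultilinearMap.map_sum_finset
    _ _).trans (sum_congr rfl fun r _ => ?_)
  rw [MultilinearMap.map_smul_univ, smul_eq_mul, ← Matrix.det_transpose]
  rfl

/-- The factor of an entry `b` whose upper-left neighbour is `A` and upper-right neighbour is `a`;
the three cases are left-leaning, right-leaning and special entries. -/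
def leanCoeff (q : R) (a A b : ℕ) : R :=
  if b = A then -q else if b = a then 1 else 1 - q

theorem sub_mul_sum_leanCoeff (q u v : R) {a A : ℕ} (h : a < A) :
    (u - v) * ∑ b ∈ Icc a A, leanCoeff q a A b * u ^ (A - b) * v ^ b
      = (u - q * v) * (v ^ a * u ^ (A - a) - v ^ A) := by
  obtain ⟨d, rfl⟩ : ∃ d, A = a + 1 + d := ⟨A - (a + 1), by omega⟩
  have hgeom := (Commute.all v u).geom_sum₂_Ico_mul (Nat.le_add_right (a + 1) d)
  have hinterior :
      ∑ b ∈ Ioo a (a + 1 + d), leanCoeff q a (a + 1 + d) b * u ^ (a + 1 + d - b) * v ^ b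
      = (1 - q) * u * ∑ b ∈ Ico (a + 1) (a + 1 + d), v ^ b * u ^ (a + 1 + d - 1 - b) := by
    rw [mul_sum, ← Finset.Ico_add_one_left_eq_Ioo]
    refine sum_congr rfl fun b hb => ?_
    obtain ⟨hab, hbA⟩ := mem_Ico.mp hb
    rw [leanCoeff, if_neg hbA.ne, if_neg (by omega),
      show a + 1 + d - b = a + 1 + d - 1 - b + 1 by omega, pow_succ]
    ring
  rw [Icc_eq_cons_Ioc h.le, sum_cons, Ioc_eq_cons_Ioo h, sum_cons, hinterior]
  simp only [leanCoeff, if_neg h.ne, if_true, Nat.sub_self, pow_zero,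
    show a + 1 + d - a = d + 1 by omega, show a + 1 + d - (a + 1) = d by omega] at hgeom ⊢
  linear_combination -(1 - q) * u * hgeom

def interlacing (α : Fin (n + 1) → ℕ) : Finset (Fin n → ℕ) :=
  Fintype.piFinset fun k => Icc (α k.succ) (α k.castSucc)

def branchCoeff (q : R) (α : Fin (n + 1) → ℕ) (β : Fin n → ℕ) : R :=
  ∏ k, leanCoeff q (α k.succ) (α k.castSucc) (β k)

theorem sum_tsub_add_last {α : Fin (n + 1) → ℕ} {β : Fin n → ℕ}
    (hβ : ∀ k, β k ≤ α k.castSucc) :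
    ∑ k : Fin n, (α k.castSucc - β k) + α (Fin.last n) = ∑ j, α j - ∑ k, β k := by
  have hle : ∑ k, β k ≤ ∑ k : Fin n, α k.castSucc := sum_le_sum fun k _ => hβ k
  rw [sum_tsub_distrib _ fun k _ => hβ k, Fin.sum_univ_castSucc]
  omega

theorem weylDenom_mul_alternant_succ (q : R) (x : Fin (n + 1) → R)
    {α : Fin (n + 1) → ℕ} (hα : StrictAnti α) :
    weylDenom q x * alternant x α = (∏ i : Fin n, (x 0 - x i.succ)) *
      ∑ β ∈ interlacing α, branchCoeff q α β * x 0 ^ (∑ j, α j - ∑ k, β k) *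
        (weylDenom q (x ∘ Fin.succ) * alternant (x ∘ Fin.succ) β) := by
  rw [weylDenom_succ, alternant_eq_pow_mul_det x hα.antitone]
  set N : Matrix (Fin n) (Fin n) R := Matrix.of fun i k =>
    x i.succ ^ α k.succ * x 0 ^ (α k.castSucc - α k.succ) - x i.succ ^ α k.castSucc
  set S : Matrix (Fin n) (Fin n) R := Matrix.of fun i k => ∑ b ∈ Icc (α k.succ) (α k.castSucc),
    leanCoeff q (α k.succ) (α k.castSucc) b * x 0 ^ (α k.castSucc - b) * x i.succ ^ b with hS
  have hNS : (∏ i : Fin n, (x 0 - q * x i.succ)) * N.det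
      = (∏ i : Fin n, (x 0 - x i.succ)) * S.det := by
    rw [← Matrix.det_mul_column, ← Matrix.det_mul_column]
    congr 1
    ext i k
    exact (sub_mul_sum_leanCoeff q _ _ (hα (Fin.castSucc_lt_succ (i := k)))).symm
  rw [show ∀ a w c d : R, a * w * (c * d) = c * w * (a * d) from fun _ _ _ _ => by ring, hNS, hS,
    Matrix.det_of_sum_mul (fun k : Fin n => Icc (α k.succ) (α k.castSucc))
      (fun k b => leanCoeff q (α k.succ) (α k.castSucc) b * x 0 ^ (α k.castSucc - b))
      fun b (i : Fin n) => x i.succ ^ b, mul_sum, mul_sum, mul_sum]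
  refine sum_congr rfl fun β hβ => ?_
  have hβle : ∀ k, β k ≤ α k.castSucc := fun k =>
    (mem_Icc.mp (Fintype.mem_piFinset.mp hβ k)).2
  rw [← sum_tsub_add_last hβle, pow_add, ← prod_pow_eq_pow_sum, branchCoeff, alternant]
  simp only [prod_mul_distrib, Function.comp_apply]
  ring

theorem Antitone.of_mem_interlacing {α : Fin (n + 1) → ℕ} (hα : Antitone α)
    {β : Fin n → ℕ} (hβ : β ∈ interlacing α) : Antitone β := by
  have hbounds := fun k => mem_Icc.mp (Fintype.mem_piFinset.mp hβ k)
  intro k l hkl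
  rcases hkl.lt_or_eq with hlt | rfl
  · exact (hbounds l).2.trans ((hα (Fin.succ_le_castSucc_iff.mpr hlt)).trans (hbounds k).1)
  · exact le_rfl

theorem branchCoeff_eq (q : R) (α : Fin (n + 1) → ℕ) (β : Fin n → ℕ) :
    branchCoeff q α β = (1 - q) ^ #{k | β k ≠ α k.castSucc ∧ β k ≠ α k.succ}
      * (-q) ^ #{k | β k = α k.castSucc} := by
  have hsplit : ∀ a A b : ℕ, leanCoeff q a A b
      = (if b ≠ A ∧ b ≠ a then 1 - q else 1) * (if b = A then -q else 1) := by
    intro a A b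
    unfold leanCoeff
    split_ifs <;> simp_all
  simp only [branchCoeff, hsplit, prod_mul_distrib, prod_ite, prod_const, one_pow, mul_one]

end Alternant

theorem Finset.sum_range_succ_sum_range_succ_shift {M : Type*} [AddCommMonoid M] (n : ℕ)
    {f : ℕ → ℕ → M} (h₀ : ∀ j, f 0 j = 0) (h₀' : ∀ i, f (i + 1) 0 = 0) :
    ∑ i ∈ range (n + 1), ∑ j ∈ range (n + 1), f i j
      = ∑ i ∈ range n, ∑ j ∈ range n, f (i + 1) (j + 1) := by
  simp [sum_range_succ', h₀, h₀']

theorem Finset.sum_range_sum_range_ite_zero {M : Type*} [AddCommMonoid M] (n : ℕ)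
    (g : ℕ → M) :
    ∑ i ∈ range n, ∑ j ∈ range n, (if i = 0 then g j else 0) = ∑ j ∈ range n, g j := by
  rcases n with _ | n
  · simp
  · simp [sum_range_succ']

theorem pad_val {m : ℕ} (α : Fin m → ℕ) (k : Fin m) : pad α k = α k := by
  rw [pad, dif_pos k.isLt]

theorem pad_castSucc {n : ℕ} (α : Fin (n + 1) → ℕ) (k : Fin n) : pad α k = α k.castSucc :=
  pad_val α k.castSucc

theorem pad_succ {n : ℕ} (α : Fin (n + 1) → ℕ) (k : Fin n) : pad α (k + 1) = α k.succ :=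
  pad_val α k.succ

abbrev SGT {n : ℕ} (α : Fin n → ℕ) : Type := {T : GTP n // T.Strict ∧ T.TopRow α}

namespace GTP

variable {n : ℕ}

@[ext]
theorem ext {T S : GTP n} (h : T.τ = S.τ) : T = S := by
  cases T
  cases S
  subst h
  rfl

theorem τ_le_rowsum_zero (T : GTP n) (i j : ℕ) : T.τ i j ≤ rowsum T 0 := by
  induction i generalizing j with
  | zero =>
    by_cases hj : j < n
    · exact single_le_sum (fun _ _ => Nat.zero_le _) (mem_range.mpr hj)
    · simp [T.supp 0 j (.inl (not_lt.mp hj))]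
  | succ i ih =>
    by_cases hij : i + 1 ≤ j ∧ j < n
    · exact (T.interUp (i + 1) j (by omega) hij.1 hij.2).trans (ih _)
    · simp [T.supp (i + 1) j (by omega)]

theorem TopRow.rowsum_zero {α : Fin n → ℕ} {T : GTP n} (h : T.TopRow α) :
    rowsum T 0 = ∑ k, α k := by
  rw [rowsum, ← Fin.sum_univ_eq_sum_range]
  exact sum_congr rfl fun k _ => by rw [h, pad_val]

instance {α : Fin n → ℕ} : Finite (SGT α) := by
  refine Finite.of_injective (fun T : SGT α => fun i j : Fin n =>
    (⟨T.1.τ i j, Nat.lt_succ_of_le ((T.1.τ_le_rowsum_zero i j).trans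
      T.2.2.rowsum_zero.le)⟩ : Fin (∑ k, α k + 1))) fun T S h => Subtype.ext (GTP.ext ?_)
  ext i j
  by_cases hij : i < n ∧ j < n
  · simpa using congr_fun (congr_fun h ⟨i, hij.1⟩) ⟨j, hij.2⟩
  · by_cases hj : j < n
    · rw [T.1.supp i j (.inr (by omega)), S.1.supp i j (.inr (by omega))]
    · rw [T.1.supp i j (.inl (by omega)), S.1.supp i j (.inl (by omega))]

noncomputable instance {α : Fin n → ℕ} : Fintype (SGT α) := Fintype.ofFinite _

instance {α : Fin 0 → ℕ} : Unique (SGT α) where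
  default := ⟨⟨fun _ _ => 0, fun _ _ _ => rfl, fun _ _ _ _ => le_rfl, fun _ _ _ _ _ => le_rfl,
    fun _ _ _ _ _ => le_rfl⟩, fun _ _ _ h => absurd h (Nat.not_lt_zero _), fun _ => rfl⟩
  uniq T := Subtype.ext <| GTP.ext <| funext₂ fun i j => T.1.supp i j (.inl (Nat.zero_le j))

theorem TopRow.strictAnti {α : Fin (n + 1) → ℕ} {T : GTP (n + 1)} (hs : T.Strict)
    (htop : T.TopRow α) : StrictAnti α := by
  refine Fin.strictAnti_iff_succ_lt.mpr fun k => ?_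
  have := hs 0 k (Nat.zero_le _) (by omega)
  rwa [htop, htop, pad_succ, pad_castSucc] at this

def tail (T : GTP (n + 1)) : GTP n where
  τ i j := T.τ (i + 1) (j + 1)
  supp i j h := T.supp _ _ (by omega)
  dec i j hij hj := T.dec _ _ (by omega) (by omega)
  interUp i j hi hij hj := by
    simpa [Nat.sub_add_cancel hi, Nat.sub_add_cancel (hi.trans hij)] using
      T.interUp (i + 1) (j + 1) (by omega) (by omega) (by omega)
  interLow i j hi hij hj := by
    simpa [Nat.sub_add_cancel hi] using T.interLow (i + 1) (j + 1) (by omega) (by omega) (by omega)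

def secondRow (T : GTP (n + 1)) : Fin n → ℕ := fun k => T.τ 1 (k + 1)

theorem Strict.tail {T : GTP (n + 1)} (hs : T.Strict) : T.tail.Strict :=
  fun i j hij hj => hs (i + 1) (j + 1) (by omega) (by omega)

theorem topRow_secondRow_tail (T : GTP (n + 1)) : T.tail.TopRow T.secondRow := by
  intro j
  by_cases hj : j < n
  · rw [pad, dif_pos hj]
    rfl
  · rw [pad, dif_neg hj]
    exact T.supp 1 (j + 1) (.inl (by omega))

theorem TopRow.secondRow_mem_interlacing {α : Fin (n + 1) → ℕ} {T : GTP (n + 1)}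
    (htop : T.TopRow α) : T.secondRow ∈ interlacing α := by
  refine Fintype.mem_piFinset.mpr fun k => mem_Icc.mpr ⟨?_, ?_⟩
  · have := T.interLow 1 (k + 1) le_rfl (by omega) (by omega)
    rwa [Nat.sub_self, htop, pad_succ] at this
  · have := T.interUp 1 (k + 1) le_rfl (by omega) (by omega)
    rwa [Nat.sub_self, Nat.add_sub_cancel, htop, pad_castSucc] at this

def consτ (a : ℕ → ℕ) (t : ℕ → ℕ → ℕ) : ℕ → ℕ → ℕ
  | 0, j => a j
  | _ + 1, 0 => 0
  | i + 1, j + 1 => t i j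

def cons (α : Fin (n + 1) → ℕ) (hα : Antitone α) (T : GTP n)
    (h : ∀ j < n, pad α (j + 1) ≤ T.τ 0 j ∧ T.τ 0 j ≤ pad α j) : GTP (n + 1) where
  τ := consτ (pad α) T.τ
  supp i j hij := by
    rcases i with _ | i
    · exact dif_neg (by omega)
    rcases j with _ | j
    · rfl
    · exact T.supp i j (by omega)
  dec i j hij hj := by
    rcases i with _ | i
    · simp only [consτ, pad, dif_pos hj, dif_pos (show j < n + 1 by omega)]
      exact hα (Fin.mk_le_mk.mpr (Nat.le_succ j))
    · obtain ⟨j, rfl⟩ : ∃ j', j = j' + 1 := ⟨j - 1, by omega⟩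
      exact T.dec i j (by omega) (by omega)
  interUp i j hi hij hj := by
    obtain ⟨i, rfl⟩ : ∃ i', i = i' + 1 := ⟨i - 1, by omega⟩
    obtain ⟨j, rfl⟩ : ∃ j', j = j' + 1 := ⟨j - 1, by omega⟩
    rcases i with _ | i
    · exact (h j (by omega)).2
    · obtain ⟨j, rfl⟩ : ∃ j', j = j' + 1 := ⟨j - 1, by omega⟩
      exact T.interUp (i + 1) (j + 1) (by omega) (by omega) (by omega)
  interLow i j hi hij hj := by
    obtain ⟨i, rfl⟩ : ∃ i', i = i' + 1 := ⟨i - 1, by omega⟩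
    obtain ⟨j, rfl⟩ : ∃ j', j = j' + 1 := ⟨j - 1, by omega⟩
    rcases i with _ | i
    · exact (h j (by omega)).1
    · exact T.interLow (i + 1) j (by omega) (by omega) (by omega)

theorem topRow_cons (α : Fin (n + 1) → ℕ) (hα : Antitone α) (T : GTP n) (h) :
    (cons α hα T h).TopRow α :=
  fun _ => rfl

theorem Strict.cons {α : Fin (n + 1) → ℕ} (hα : StrictAnti α) {T : GTP n} (hs : T.Strict) (h) :
    (GTP.cons α hα.antitone T h).Strict := by
  intro i j hij hj
  rcases i with _ | i
  · simp only [GTP.cons, consτ, pad, dif_pos hj, dif_pos (show j < n + 1 by omega)]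
    exact hα (Fin.mk_lt_mk.mpr (Nat.lt_succ_self j))
  · obtain ⟨j, rfl⟩ : ∃ j', j = j' + 1 := ⟨j - 1, by omega⟩
    exact hs i j (by omega) (by omega)

theorem TopRow.cons_tail {α : Fin (n + 1) → ℕ} (hα : Antitone α) {T : GTP (n + 1)}
    (htop : T.TopRow α) (h) : cons α hα T.tail h = T := by
  ext i j
  rcases i with _ | i
  · exact (htop j).symm
  rcases j with _ | j
  · exact (T.supp (i + 1) 0 (.inr (by omega))).symm
  · rfl

theorem TopRow.secondRow_cons {α : Fin (n + 1) → ℕ} (hα : Antitone α) {β : Fin n → ℕ}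
    {T : GTP n} (htop : T.TopRow β) (h) : (cons α hα T h).secondRow = β := by
  ext k
  exact (htop k).trans (pad_val β k)

theorem TopRow.bounds_of_mem_interlacing {α : Fin (n + 1) → ℕ} {β : Fin n → ℕ}
    (hβ : β ∈ interlacing α) {T : GTP n} (htop : T.TopRow β) :
    ∀ j < n, pad α (j + 1) ≤ T.τ 0 j ∧ T.τ 0 j ≤ pad α j := by
  intro j hj
  rw [htop, ← mem_Icc, show pad β j = β ⟨j, hj⟩ from dif_pos hj,
    show pad α j = α (Fin.castSucc ⟨j, hj⟩) from dif_pos (by omega),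
    show pad α (j + 1) = α (Fin.succ ⟨j, hj⟩) from dif_pos (by omega)]
  exact Fintype.mem_piFinset.mp hβ ⟨j, hj⟩

def entryCount (T : GTP n) (Q : ℕ → ℕ → ℕ → Prop) [∀ a b c, Decidable (Q a b c)] : ℕ :=
  #{p ∈ range n ×ˢ range n | 1 ≤ p.1 ∧ p.1 ≤ p.2 ∧
    Q (T.τ p.1 p.2) (T.τ (p.1 - 1) (p.2 - 1)) (T.τ (p.1 - 1) p.2)}

theorem entryCount_succ (T : GTP (n + 1)) (Q : ℕ → ℕ → ℕ → Prop)
    [∀ a b c, Decidable (Q a b c)] :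
    T.entryCount Q = #{k : Fin n | Q (T.τ 1 (k + 1)) (T.τ 0 k) (T.τ 0 (k + 1))}
      + T.tail.entryCount Q := by
  have hentry : ∀ i j, (if 1 ≤ i + 1 ∧ i + 1 ≤ j + 1 ∧
        Q (T.τ (i + 1) (j + 1)) (T.τ (i + 1 - 1) (j + 1 - 1)) (T.τ (i + 1 - 1) (j + 1))
        then 1 else 0)
      = (if i = 0 then if Q (T.τ 1 (j + 1)) (T.τ 0 j) (T.τ 0 (j + 1)) then 1 else 0 else 0)
        + if 1 ≤ i ∧ i ≤ j ∧ Q (T.tail.τ i j) (T.tail.τ (i - 1) (j - 1)) (T.tail.τ (i - 1) j)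
          then 1 else 0 := by
    intro i j
    rcases i with _ | i
    · simp
    rcases j with _ | j
    · simp
    · simp [tail]
  rw [entryCount, entryCount, card_filter, card_filter, card_filter, sum_product, sum_product]
  refine (sum_range_succ_sum_range_succ_shift n (fun j => ?_) (fun i => ?_)).trans ?_
  · simp
  · simp
  simp only [hentry, sum_add_distrib, sum_range_sum_range_ite_zero, Fin.sum_univ_eq_sum_range
    (fun j => if Q (T.τ 1 (j + 1)) (T.τ 0 j) (T.τ 0 (j + 1)) then 1 else 0)]

theorem TopRow.lcount_eq {α : Fin (n + 1) → ℕ} {T : GTP (n + 1)} (htop : T.TopRow α) :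
    lcount T = #{k | T.secondRow k = α k.castSucc} + lcount T.tail := by
  refine (entryCount_succ T fun a b _ => a = b).trans ?_
  congr 2
  ext k
  rw [mem_filter, mem_filter, htop, pad_castSucc]
  rfl

theorem TopRow.zcount_eq {α : Fin (n + 1) → ℕ} {T : GTP (n + 1)} (htop : T.TopRow α) :
    zcount T = #{k | T.secondRow k ≠ α k.castSucc ∧ T.secondRow k ≠ α k.succ}
      + zcount T.tail := by
  refine (entryCount_succ T fun a b c => a ≠ b ∧ a ≠ c).trans ?_
  congr 2
  ext k
  rw [mem_filter, mem_filter, htop, htop, pad_castSucc, pad_succ]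
  rfl

theorem rowsum_tail (T : GTP (n + 1)) (i : ℕ) : rowsum T (i + 1) = rowsum T.tail i := by
  rw [rowsum, sum_range_succ', T.supp (i + 1) 0 (.inr (Nat.succ_pos i)), add_zero]
  rfl

end GTP

def sgtEquivSigma {n : ℕ} {α : Fin (n + 1) → ℕ} (hα : StrictAnti α) :
    SGT α ≃ Σ β : interlacing α, SGT (β : Fin n → ℕ) where
  toFun T := ⟨⟨T.1.secondRow, T.2.2.secondRow_mem_interlacing⟩,
    ⟨T.1.tail, T.2.1.tail, T.1.topRow_secondRow_tail⟩⟩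
  invFun T := ⟨GTP.cons α hα.antitone T.2.1 (T.2.2.2.bounds_of_mem_interlacing T.1.2),
    T.2.2.1.cons hα _, GTP.topRow_cons _ _ _ _⟩
  left_inv T := Subtype.ext <| T.2.2.cons_tail hα.antitone <|
    T.1.topRow_secondRow_tail.bounds_of_mem_interlacing T.2.2.secondRow_mem_interlacing
  right_inv T := Sigma.subtype_ext (Subtype.ext <| T.2.2.2.secondRow_cons hα.antitone <|
    T.2.2.2.bounds_of_mem_interlacing T.1.2) rfl

def gtWeight {n : ℕ} (q : R) (x : Fin n → R) (T : GTP n) : R :=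
  (1 - q) ^ zcount T * (-q) ^ lcount T * ∏ i : Fin n, x i ^ (rowsum T i - rowsum T (i + 1))

theorem GTP.TopRow.gtWeight_eq {n : ℕ} (q : R) (x : Fin (n + 1) → R) {α : Fin (n + 1) → ℕ}
    {T : GTP (n + 1)} (htop : T.TopRow α) :
    gtWeight q x T = branchCoeff q α T.secondRow * x 0 ^ (∑ j, α j - ∑ k, T.secondRow k)
      * gtWeight q (x ∘ Fin.succ) T.tail := by
  have hrow₀ : rowsum T 0 = ∑ j, α j := htop.rowsum_zero
  have hrow₁ : rowsum T 1 = ∑ k, T.secondRow k :=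
    (T.rowsum_tail 0).trans T.topRow_secondRow_tail.rowsum_zero
  rw [gtWeight, gtWeight, htop.zcount_eq, htop.lcount_eq, branchCoeff_eq, Fin.prod_univ_succ]
  simp only [Fin.val_zero, zero_add, hrow₀, hrow₁, Fin.val_succ, GTP.rowsum_tail,
    Function.comp_apply]
  ring

theorem sum_gtWeight_succ {n : ℕ} (q : R) (x : Fin (n + 1) → R) {α : Fin (n + 1) → ℕ}
    (hα : StrictAnti α) :
    ∑ T : SGT α, gtWeight q x T.1 = ∑ β ∈ interlacing α,
      branchCoeff q α β * x 0 ^ (∑ j, α j - ∑ k, β k) *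
        ∑ T : SGT β, gtWeight q (x ∘ Fin.succ) T.1 := by
  rw [← (sgtEquivSigma hα).symm.sum_comp, Fintype.sum_sigma, ← sum_coe_sort (interlacing α)]
  refine sum_congr rfl fun β _ => ?_
  rw [mul_sum]
  refine sum_congr rfl fun T _ => ?_
  have htop := GTP.topRow_cons α hα.antitone T.1 (T.2.2.bounds_of_mem_interlacing β.2)
  refine (htop.gtWeight_eq q x).trans ?_
  rw [T.2.2.secondRow_cons]
  rfl

theorem weylDenom_mul_alternant (q : R) {n : ℕ} (x : Fin n → R) {α : Fin n → ℕ}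
    (hα : Antitone α) :
    weylDenom q x * alternant x α = weylDenom 1 x * ∑ T : SGT α, gtWeight q x T.1 := by
  induction n with
  | zero =>
    simp [weylDenom, alternant, gtWeight, zcount, lcount]
  | succ n ih =>
    by_cases hs : StrictAnti α
    · rw [weylDenom_mul_alternant_succ q x hs, sum_gtWeight_succ q x hs, weylDenom_succ 1 x,
        mul_sum, mul_sum]
      refine sum_congr rfl fun β hβ => ?_
      rw [ih (x ∘ Fin.succ) (hα.of_mem_interlacing hβ)]
      simp only [one_mul]
      ring
    · have hinj : ¬ Function.Injective α := fun h => hs (hα.strictAnti_iff_injective.mpr h)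
      have : IsEmpty (SGT α) := ⟨fun T => hs (T.2.2.strictAnti T.2.1)⟩
      simp [alternant_eq_zero_of_not_injective x hinj]

theorem pact0_x0 (n : ℕ) (σ : Equiv.Perm (Fin n)) (i : Fin n) :
    pact0 n σ (x0 n i) = x0 n (σ i) := by
  rw [x0, pact0, IsFractionRing.lift_algebraMap]
  simp [x0]

theorem x0_injective (n : ℕ) : Function.Injective (x0 n) := fun _ _ h =>
  Option.some_injective _ <| X_injective <| IsFractionRing.injective (R0 n) (F0 n) h

theorem Delta0_one_ne_zero (n : ℕ) : Delta0 n 1 ≠ 0 :=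
  prod_ne_zero_iff.mpr fun i _ => prod_ne_zero_iff.mpr fun j hj => by
    rw [one_mul, sub_ne_zero]
    exact (x0_injective n).ne (mem_Ioi.mp hj).ne

theorem Delta0_one_mul_sum_pact0 (n : ℕ) (α : Fin n → ℕ) :
    Delta0 n 1 * ∑ σ : Equiv.Perm (Fin n), pact0 n σ ((∏ i, x0 n i ^ α i) / Delta0 n 1)
      = alternant (x0 n) α := by
  have hΔ : ∀ σ, pact0 n σ (Delta0 n 1) = Equiv.Perm.sign σ * Delta0 n 1 := fun σ => by
    change _ = _ * weylDenom 1 (x0 n)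
    rw [← weylDenom_one_comp_perm]
    simp only [Delta0, weylDenom, map_prod, map_sub, map_mul, map_one, pact0_x0,
      Function.comp_apply]
  rw [alternant, Matrix.det_apply', mul_sum]
  refine sum_congr rfl fun σ _ => ?_
  rw [map_div₀, hΔ, map_prod]
  simp only [map_pow, pact0_x0, Matrix.of_apply]
  rcases Int.units_eq_one_or (Equiv.Perm.sign σ) with h | h <;>
    simp [h, div_neg, mul_div_cancel₀ _ (Delta0_one_ne_zero n)]

/-- **Tokuyama's theorem.** For a weakly decreasing tuple `λ` of nonnegative
integers of length `n`,
`∏_{i<j}(x_i - q x_j) ⬝ s_λ(x) = Σ_{T ∈ SGT(λ+ρ_n)} (1-q)^{z(T)} (-q)^{l(T)} x^{m(T)}`. -/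
theorem tokuyama (n : ℕ) (lam : Fin n → ℕ)
    (hlam : ∀ i j : Fin n, i ≤ j → lam j ≤ lam i) :
    Delta0 n (q0 n) * Schur0 n lam =
      ∑ᶠ T : {T : GTP n // T.Strict ∧ T.TopRow (fun i => lam i + rho n i)},
        (1 - q0 n) ^ zcount T.1 * (-q0 n) ^ lcount T.1 * xm0 n T.1 := by
  have hα : Antitone fun i => lam i + rho n i := fun i j hij =>
    add_le_add (hlam i j hij) (Nat.sub_le_sub_left (Fin.le_def.mp hij) _)
  apply mul_left_cancel₀ (Delta0_one_ne_zero n)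
  rw [mul_left_comm, Schur0, Delta0_one_mul_sum_pact0, finsum_eq_sum_of_fintype]
  exact weylDenom_mul_alternant (q0 n) (x0 n) hα
end
end
end

section
/- Let κ = (κ_1,…,κ_m) be a weakly decreasing tuple of nonnegative integers of length m > 2 and κ' = (κ_2,…,κ_m). Then, in F, P_κ(x;t) = Σ_{i=1}^m x_i^{κ_1} · ∏_{1≤a≤m, a≠i} (x_i − t x_a)/(x_i − x_a) · ζ_i(P_{κ'}(x;t)), where P_{κ'}(x;t) is the Hall–Littlewood polynomial in the variables x_1,…,x_{m−1}. -/
/-!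
In each summand `σ(x^κ ∏_{a<b} (x_a - t x_b)/(x_a - x_b))` of `P_κ`, the factors involving the
first variable split off: if `σ(1) = i` they give `x_i^{κ_1} ∏_{a ≠ i} (x_i - t x_a)/(x_i - x_a)`,
independently of the rest of `σ`, and what remains is a summand of `P_{κ'}` in the variables
`x_a`, `a ≠ i`. Summing over the permutations with `σ(1) = i` symmetrises over these variables,
which are the images of `x_1, …, x_{m-1}` under `ζ_i`; the symmetrisation depends only on the set of
variables, not on how they are listed, so the inner sum is `ζ_i(P_{κ'})`.
-/

open MvPolynomial Finset

noncomputable section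

abbrev Rr : Type := MvPolynomial (Fin 2 ⊕ ℕ) ℚ

abbrev F : Type := FractionRing Rr

/-- The variable `q`. -/
def q : F := algebraMap Rr F (X (Sum.inl 0))

/-- The variable `t`. -/
def t : F := algebraMap Rr F (X (Sum.inl 1))

/-- `x k` is the variable `x_{k+1}` of the paper (0-indexed). -/
def x (k : ℕ) : F := algebraMap Rr F (X (Sum.inr k))

/-- Substitution endomorphism of `F` induced by an injective map of variables. -/
def subF (g : Fin 2 ⊕ ℕ → Fin 2 ⊕ ℕ) (hg : Function.Injective g) : F →+* F :=
  IsFractionRing.lift (g := (algebraMap Rr F).comp (rename g).toRingHom)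
    (by
      rw [RingHom.coe_comp]
      exact (IsFractionRing.injective Rr F).comp (rename_injective g hg))

def permNat (n : ℕ) (σ : Equiv.Perm (Fin n)) : ℕ → ℕ :=
  fun k => if h : k < n then (σ ⟨k, h⟩ : ℕ) else k

lemma permNat_inj (n : ℕ) (σ : Equiv.Perm (Fin n)) : Function.Injective (permNat n σ) := by
  intro a b hab
  unfold permNat at hab
  split_ifs at hab with h1 h2 h2
  · have := σ.injective (Fin.val_injective hab)
    exact congrArg Fin.val this
  · have := (σ ⟨a, h1⟩).isLt; omega
  · have := (σ ⟨b, h2⟩).isLt; omega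
  · exact hab

/-- The action of a permutation `σ ∈ S_n` on `F`, permuting `x_1, …, x_n`. -/
def pact (n : ℕ) (σ : Equiv.Perm (Fin n)) : F →+* F :=
  subF (Sum.map id (permNat n σ)) (Function.injective_id.sumMap (permNat_inj n σ))

def shiftNat (i : ℕ) : ℕ → ℕ := fun k => if k < i then k else k + 1

lemma shiftNat_inj (i : ℕ) : Function.Injective (shiftNat i) := by
  intro a b; unfold shiftNat; split_ifs <;> omega

/-- `zeta i` is the endomorphism `ζ_{i+1}` of the paper: it fixes `q`, `t` and
`x k` for `k < i`, and sends `x k` to `x (k+1)` for `k ≥ i` (0-indexed). -/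
def zeta (i : ℕ) : F →+* F :=
  subF (Sum.map id (shiftNat i)) (Function.injective_id.sumMap (shiftNat_inj i))

/-- `zetaP i j` is `ζ_{i+1,j+1}` of the paper. -/
def zetaP (i j : ℕ) : F →+* F := (zeta (max i j)).comp (zeta (min i j))

/-- The Hall–Littlewood polynomial `P_λ(x; t)` in `n` variables. -/
def HL (n : ℕ) (lam : Fin n → ℕ) : F :=
  ∑ σ : Equiv.Perm (Fin n), pact n σ
    ((∏ i : Fin n, x i.val ^ lam i) *
      ∏ i : Fin n, ∏ j ∈ Finset.Ioi i, (x i.val - t * x j.val) / (x i.val - x j.val))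

/-- The deformed Weyl denominator `Δ_n(c) = ∏_{i<j} (x_i - c x_j)`. -/
def DeltaQ (n : ℕ) (c : F) : F := ∏ i : Fin n, ∏ j ∈ Finset.Ioi i, (x i.val - c * x j.val)

/-- The Schur polynomial `s_λ(x) = Σ_σ σ(x^{λ+ρ}/Δ_n)`. -/
def Schur (n : ℕ) (lam : Fin n → ℕ) : F :=
  ∑ σ : Equiv.Perm (Fin n), pact n σ
    ((∏ i : Fin n, x i.val ^ (lam i + rho n i)) / DeltaQ n 1)

/-- `GT2 n α` is the set of tuples `μ` of length `n` with `α_{i+1} ≤ μ_i ≤ α_i`. -/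
def GT2 (n : ℕ) (α : Fin (n+1) → ℕ) : Finset (Fin n → ℕ) :=
  Fintype.piFinset (fun i => Finset.Icc (α i.succ) (α i.castSucc))

def GLw (y a : ℕ) : F := if y = a then -q else if y + 1 = a then t else 0

def GRw (y b : ℕ) : F := if y = b then 1 else if y = b + 1 then -q * t else 0

/-- `w(μ_j)` where `a1 = α_j`, `a2 = α_{j+1}`, `m = μ_j`. -/
def wgt (a1 a2 m : ℕ) : F :=
  (if m = a1 ∨ m = a2 then 0 else (1 - q) * (1 - t)) + GLw m a1 + GRw m a2

/-- The tridiagonal determinant `M(α; μ)`. -/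
def Mdet (n : ℕ) (α : Fin (n+1) → ℕ) (μ : Fin n → ℕ) : F :=
  Matrix.det (Matrix.of fun i j : Fin n =>
    if i = j then wgt (α i.castSucc) (α i.succ) (μ i)
    else if (i : ℕ) + 1 = (j : ℕ) then 1
    else if (j : ℕ) + 1 = (i : ℕ) then GRw (μ j) (α i.castSucc) * GLw (μ i) (α i.castSucc)
    else 0)

def tot {n : ℕ} (f : Fin n → ℕ) : ℕ := ∑ i, f i


theorem Function.Injective.exists_perm_comp_eq_of_range_eq {α β : Type*} {f g : α → β}
    (hf : Function.Injective f) (hg : Function.Injective g) (hr : Set.range f = Set.range g) :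
    ∃ π : Equiv.Perm α, g ∘ π = f :=
  ⟨(Equiv.ofInjective f hf).trans ((Equiv.setCongr hr).trans (Equiv.ofInjective g hg).symm),
    funext fun _ => Equiv.apply_ofInjective_symm hg _⟩

theorem Fin.exists_perm_succAbove_comp_eq_swap_comp_succ {n : ℕ} (p : Fin (n + 1)) :
    ∃ π : Equiv.Perm (Fin n), p.succAbove ∘ π = Equiv.swap 0 p ∘ Fin.succ := by
  refine ((Equiv.injective _).comp (Fin.succ_injective _)).exists_perm_comp_eq_of_range_eq
    Fin.succAbove_right_injective ?_
  rw [Set.range_comp, Fin.range_succ, Fin.range_succAbove, Set.image_compl_eq (Equiv.bijective _),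
    Set.image_singleton, Equiv.swap_apply_left]

theorem Finset.prod_erase_range_eq_prod_succAbove {M : Type*} [CommMonoid M] {n : ℕ}
    (p : Fin (n + 1)) (g : ℕ → M) :
    ∏ a ∈ (Finset.range (n + 1)).erase p, g a = ∏ k : Fin n, g (p.succAbove k) := by
  symm
  refine Finset.prod_nbij (fun k => p.succAbove k) (fun k _ => ?_) (fun k _ l _ h => ?_)
    (fun a ha => ?_) (fun _ _ => rfl)
  · simp [Fin.val_ne_iff, Fin.succAbove_ne, Fin.is_le]
  · exact Fin.succAbove_right_injective (Fin.val_injective h)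
  · obtain ⟨han, hap⟩ : a ≤ n ∧ a ≠ p := by simpa using ha
    obtain ⟨k, hk⟩ := Fin.exists_succAbove_eq (x := ⟨a, by omega⟩) (y := p) (Fin.ne_of_val_ne hap)
    exact ⟨k, Finset.mem_coe.2 (Finset.mem_univ k), congrArg Fin.val hk⟩

namespace HallLittlewood

def tRatio (a b : ℕ) : F := (x a - t * x b) / (x a - x b)

def hlSummand (n : ℕ) (lam : Fin n → ℕ) (φ : Fin n → ℕ) : F :=
  (∏ i : Fin n, x (φ i) ^ lam i) * ∏ i : Fin n, ∏ j ∈ Finset.Ioi i, tRatio (φ i) (φ j)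

/-- The symmetrisation defining `HL n lam`, carried out in the variables `x (f 0), …, x (f (n-1))`
instead of `x 0, …, x (n-1)`. -/
def hlSum (n : ℕ) (lam : Fin n → ℕ) (f : Fin n → ℕ) : F :=
  ∑ σ : Equiv.Perm (Fin n), hlSummand n lam (f ∘ σ)

theorem subF_algebraMap (g : Fin 2 ⊕ ℕ → Fin 2 ⊕ ℕ) (hg : Function.Injective g) (r : Rr) :
    subF g hg (algebraMap Rr F r) = algebraMap Rr F (rename g r) :=
  IsFractionRing.lift_algebraMap _ _

theorem pact_t (n : ℕ) (σ : Equiv.Perm (Fin n)) : pact n σ t = t := by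
  rw [pact, t, subF_algebraMap, rename_X]; rfl

theorem zeta_t (p : ℕ) : zeta p t = t := by
  rw [zeta, t, subF_algebraMap, rename_X]; rfl

theorem pact_x (n : ℕ) (σ : Equiv.Perm (Fin n)) (i : Fin n) : pact n σ (x i) = x (σ i) := by
  rw [pact, x, subF_algebraMap, rename_X, Sum.map_inr, permNat, dif_pos i.isLt]; rfl

theorem zeta_x (p k : ℕ) : zeta p (x k) = x (shiftNat p k) := by
  rw [zeta, x, subF_algebraMap, rename_X, Sum.map_inr]; rfl

theorem val_succAbove_eq_shiftNat {n : ℕ} (p : Fin (n + 1)) (k : Fin n) :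
    (p.succAbove k : ℕ) = shiftNat p k := by
  rcases lt_or_ge k.castSucc p with h | h
  · rw [Fin.succAbove_of_castSucc_lt _ _ h, shiftNat, if_pos (show (k : ℕ) < p from h)]; rfl
  · rw [Fin.succAbove_of_le_castSucc _ _ h, shiftNat,
      if_neg (show ¬(k : ℕ) < p from not_lt.2 h)]; rfl

theorem map_hlSummand (f : F →+* F) (ht : f t = t) {n : ℕ} (lam : Fin n → ℕ) (φ ψ : Fin n → ℕ)
    (hx : ∀ i, f (x (φ i)) = x (ψ i)) : f (hlSummand n lam φ) = hlSummand n lam ψ := by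
  simp only [hlSummand, tRatio, map_mul, map_prod, map_pow, map_div₀, map_sub, ht, hx]

theorem HL_eq_hlSum (n : ℕ) (lam : Fin n → ℕ) : HL n lam = hlSum n lam Fin.val :=
  Finset.sum_congr rfl fun σ _ => map_hlSummand _ (pact_t n σ) lam _ _ (pact_x n σ)

theorem zeta_HL (p n : ℕ) (lam : Fin n → ℕ) :
    zeta p (HL n lam) = hlSum n lam (shiftNat p ∘ Fin.val) := by
  rw [HL_eq_hlSum, hlSum, hlSum, map_sum]
  exact Finset.sum_congr rfl fun σ _ => map_hlSummand _ (zeta_t p) lam _ _ fun i => zeta_x p _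

theorem hlSum_comp_perm {n : ℕ} (lam : Fin n → ℕ) (f : Fin n → ℕ) (π : Equiv.Perm (Fin n)) :
    hlSum n lam (f ∘ π) = hlSum n lam f :=
  Equiv.sum_comp (Equiv.mulLeft π) (fun σ => hlSummand n lam (f ∘ σ))

theorem hlSummand_succ {n : ℕ} (lam : Fin (n + 1) → ℕ) (φ : Fin (n + 1) → ℕ) :
    hlSummand (n + 1) lam φ =
      x (φ 0) ^ lam 0 * (∏ k : Fin n, tRatio (φ 0) (φ k.succ)) *
        hlSummand n (Fin.tail lam) (Fin.tail φ) := by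
  simp only [hlSummand, Fin.prod_univ_succ, Fin.prod_Ioi_zero, Fin.prod_Ioi_succ, Fin.tail]
  ring

theorem hlSum_succ {n : ℕ} (lam : Fin (n + 1) → ℕ) (f : Fin (n + 1) → ℕ) :
    hlSum (n + 1) lam f =
      ∑ p : Fin (n + 1), x (f p) ^ lam 0 * (∏ k : Fin n, tRatio (f p) (f (p.succAbove k))) *
        hlSum n (Fin.tail lam) (f ∘ p.succAbove) := by
  rw [hlSum, ← Equiv.sum_comp Equiv.Perm.decomposeFin.symm, Fintype.sum_prod_type]
  refine Finset.sum_congr rfl fun p _ => ?_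
  obtain ⟨π, hπ⟩ := Fin.exists_perm_succAbove_comp_eq_swap_comp_succ p
  have htail : ∀ τ : Equiv.Perm (Fin n),
      Fin.tail (f ∘ Equiv.Perm.decomposeFin.symm (p, τ)) = ((f ∘ p.succAbove) ∘ π) ∘ τ :=
    fun τ => funext fun k => by
      simp only [Fin.tail, Function.comp_apply, Equiv.Perm.decomposeFin_symm_apply_succ]
      exact congrArg f (congrFun hπ (τ k)).symm
  have hsplit : ∀ τ : Equiv.Perm (Fin n),
      hlSummand (n + 1) lam (f ∘ Equiv.Perm.decomposeFin.symm (p, τ)) =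
        x (f p) ^ lam 0 * (∏ k, tRatio (f p) (f (p.succAbove k))) *
          hlSummand n (Fin.tail lam) (((f ∘ p.succAbove) ∘ π) ∘ τ) := by
    intro τ
    have hsucc k : (f ∘ Equiv.Perm.decomposeFin.symm (p, τ)) k.succ = f (p.succAbove (π (τ k))) :=
      congrFun (htail τ) k
    rw [hlSummand_succ, htail τ, Function.comp_apply, Equiv.Perm.decomposeFin_symm_apply_zero]
    simp only [hsucc]
    rw [Equiv.prod_comp τ fun k => tRatio (f p) (f (p.succAbove (π k))),
      Equiv.prod_comp π fun k => tRatio (f p) (f (p.succAbove k))]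
  simp only [hsplit, ← Finset.mul_sum]
  rw [← hlSum, hlSum_comp_perm]

end HallLittlewood

theorem hall_littlewood_one_row_expansion_general (m : ℕ) (κ : Fin (m + 3) → ℕ) :
    HL (m + 3) κ =
      ∑ i ∈ Finset.range (m + 3),
        x i ^ κ 0 *
        (∏ a ∈ (Finset.range (m + 3)).erase i, (x i - t * x a) / (x i - x a)) *
        zeta i (HL (m + 2) (fun j => κ j.succ)) := by
  rw [HallLittlewood.HL_eq_hlSum, HallLittlewood.hlSum_succ, ← Fin.sum_univ_eq_sum_range]
  refine Finset.sum_congr rfl fun p _ => ?_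
  have hvars : Fin.val ∘ p.succAbove = shiftNat p ∘ Fin.val :=
    funext (HallLittlewood.val_succAbove_eq_shiftNat p)
  rw [Finset.prod_erase_range_eq_prod_succAbove, HallLittlewood.zeta_HL, hvars]
  rfl

/-- **Lemma (recursive expansion, one row).** For a weakly decreasing tuple `κ`
of length `m > 2`,
`P_κ(x;t) = Σ_{i=1}^m x_i^{κ_1} ∏_{a≠i} (x_i - t x_a)/(x_i - x_a) ζ_i(P_{κ'}(x;t))`
where `κ' = (κ_2, …, κ_m)`. -/
theorem hall_littlewood_one_row_expansion (m : ℕ) (κ : Fin (m + 3) → ℕ)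
    (hκ : ∀ i j : Fin (m + 3), i ≤ j → κ j ≤ κ i) :
    HL (m + 3) κ =
      ∑ i ∈ Finset.range (m + 3),
        x i ^ κ 0 *
        (∏ a ∈ (Finset.range (m + 3)).erase i, (x i - t * x a) / (x i - x a)) *
        zeta i (HL (m + 2) (fun j => κ j.succ)) :=
  hall_littlewood_one_row_expansion_general m κ

end
end

section
/- Let κ = (κ_1,…,κ_m) be a weakly decreasing tuple of nonnegative integers of length m > 2 and κ'' = (κ_3,…,κ_m). Then, in F, P_κ(x;t) = Σ_{i=1}^m Σ_{1≤j≤m, j≠i} x_i^{κ_1} x_j^{κ_2} · ∏_{1≤a≤m, a≠i}(x_i − t x_a)/(x_i − x_a) · ∏_{1≤a≤m, a≠i,j}(x_j − t x_a)/(x_j − x_a) · ζ_{i,j}(P_{κ''}(x;t)), where P_{κ''}(x;t) is the Hall–Littlewood polynomial in the variables x_1,…,x_{m−2}. -/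
open MvPolynomial Finset

noncomputable section

/-!
Write `P_κ` as the sum over `σ ∈ S_n` of `σ` applied to `x^κ ∏_{a<b} (x_a - t x_b)/(x_a - x_b)`.
The factors of this summand that involve the positions 1 and 2 depend only on `i = σ(1)` and
`j = σ(2)`; the remaining factor, summed over all `σ` with these two values, is the symmetrization
of `x^{κ''} ∏ (…)` over the variables other than `x_i, x_j`, which is `ζ_{i,j}(P_{κ''})` because
such a sum depends only on the set of variables it permutes.
-/

open Equiv Function

def hlTerm (n : ℕ) (lam u : Fin n → ℕ) : F :=
  (∏ i : Fin n, x (u i) ^ lam i) *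
    ∏ i : Fin n, ∏ j ∈ Ioi i, (x (u i) - t * x (u j)) / (x (u i) - x (u j))

lemma subF_sumMap_hlTerm (g : ℕ → ℕ) (hg : Injective (Sum.map id g)) (n : ℕ)
    (lam u : Fin n → ℕ) : subF (Sum.map id g) hg (hlTerm n lam u) = hlTerm n lam (g ∘ u) := by
  have hx : ∀ k, subF (Sum.map id g) hg (x k) = x (g k) := fun k => by
    rw [x, subF, IsFractionRing.lift_algebraMap]
    simp [x]
  have ht : subF (Sum.map id g) hg t = t := by
    rw [t, subF, IsFractionRing.lift_algebraMap]
    simp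
  simp only [hlTerm, map_mul, map_prod, map_pow, map_div₀, map_sub, hx, ht, comp_apply]

lemma HL_eq_sum_hlTerm (n : ℕ) (lam : Fin n → ℕ) :
    HL n lam = ∑ σ : Perm (Fin n), hlTerm n lam (fun k => σ k) := by
  refine sum_congr rfl fun σ _ => (subF_sumMap_hlTerm _ _ n lam Fin.val).trans ?_
  congr 1
  funext k
  simp [permNat]

lemma zetaP_HL (i j n : ℕ) (lam : Fin n → ℕ) :
    zetaP i j (HL n lam) =
      ∑ ρ : Perm (Fin n), hlTerm n lam (fun k => shiftNat (max i j) (shiftNat (min i j) (ρ k))) := by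
  rw [HL_eq_sum_hlTerm, map_sum]
  refine sum_congr rfl fun ρ _ => ?_
  rw [zetaP, RingHom.comp_apply, zeta, zeta, subF_sumMap_hlTerm, subF_sumMap_hlTerm]
  rfl

lemma sum_perm_comp_eq_of_image_eq {α M : Type*} [DecidableEq α] [AddCommMonoid M] {n : ℕ}
    (f : (Fin n → α) → M) {u v : Fin n → α} (hu : Injective u) (hv : Injective v)
    (h : image u univ = image v univ) :
    ∑ ρ : Perm (Fin n), f (u ∘ ρ) = ∑ ρ : Perm (Fin n), f (v ∘ ρ) := by
  have hrange : Set.range u = Set.range v := by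
    simpa only [coe_image, coe_univ, Set.image_univ] using congrArg ((↑) : Finset α → Set α) h
  let π : Perm (Fin n) :=
    (Equiv.ofInjective u hu).trans ((Equiv.setCongr hrange).trans (Equiv.ofInjective v hv).symm)
  have huv : u = v ∘ π := funext fun k => by
    simp [π, Equiv.apply_ofInjective_symm]
  rw [huv]
  exact Equiv.sum_comp (Equiv.mulLeft π) (fun ρ => f (v ∘ ρ))

lemma image_comp_succ {α : Type*} [DecidableEq α] {n : ℕ} {u : Fin (n + 1) → α}
    (hu : Injective u) : image (fun k : Fin n => u k.succ) univ = (image u univ).erase (u 0) := by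
  rw [Fin.univ_succ, cons_eq_insert, image_insert, erase_insert]
  · rw [map_eq_image, image_image]
    rfl
  · simp [hu.eq_iff]

lemma image_val_perm {n : ℕ} (σ : Perm (Fin n)) :
    image (fun k => (σ k : ℕ)) univ = range n := by
  ext a
  simp only [mem_image, mem_univ, true_and, mem_range]
  exact ⟨fun ⟨k, hk⟩ => hk ▸ (σ k).isLt, fun ha => ⟨σ.symm ⟨a, ha⟩, by simp⟩⟩

lemma hlTerm_succ (n : ℕ) (lam u : Fin (n + 1) → ℕ) (hu : Injective u) :
    hlTerm (n + 1) lam u =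
      x (u 0) ^ lam 0 *
        (∏ a ∈ (image u univ).erase (u 0), (x (u 0) - t * x a) / (x (u 0) - x a)) *
        hlTerm n (fun k => lam k.succ) (fun k => u k.succ) := by
  rw [← image_comp_succ hu, prod_image fun a _ b _ h => Fin.succ_injective _ (hu h)]
  simp only [hlTerm, Fin.prod_univ_succ (n := n), Fin.prod_Ioi_zero, Fin.prod_Ioi_succ]
  ring

lemma hlTerm_perm_split_two_rows (n : ℕ) (lam : Fin (n + 2) → ℕ) (σ : Perm (Fin (n + 2))) :
    hlTerm (n + 2) lam (fun k => σ k) =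
      x (σ 0) ^ lam 0 * x (σ 1) ^ lam 1 *
        (∏ a ∈ (range (n + 2)).erase (σ 0), (x (σ 0) - t * x a) / (x (σ 0) - x a)) *
        (∏ a ∈ ((range (n + 2)).erase (σ 0)).erase (σ 1), (x (σ 1) - t * x a) / (x (σ 1) - x a)) *
        hlTerm n (fun k => lam k.succ.succ) (fun k => σ k.succ.succ) := by
  have hu : Injective fun k => (σ k : ℕ) := Fin.val_injective.comp σ.injective
  have hu' : Injective fun k : Fin (n + 1) => (σ k.succ : ℕ) := hu.comp (Fin.succ_injective _)
  rw [hlTerm_succ _ _ _ hu, hlTerm_succ _ _ _ hu', image_comp_succ hu, image_val_perm]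
  simp only [Fin.succ_zero_eq_one]
  ring

lemma image_shiftNat_shiftNat {n i j : ℕ} (hij : i ≠ j) (hi : i < n + 2) (hj : j < n + 2) :
    image (fun k : Fin n => shiftNat (max i j) (shiftNat (min i j) k)) univ =
      ((range (n + 2)).erase i).erase j := by
  ext c
  simp only [mem_image, mem_univ, true_and, mem_erase, mem_range, shiftNat]
  constructor
  · rintro ⟨k, rfl⟩
    have := k.isLt
    split_ifs <;> omega
  · rintro ⟨hcj, hci, hc⟩
    by_cases h1 : c < min i j
    · exact ⟨⟨c, by omega⟩, by simp only; split_ifs <;> omega⟩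
    · by_cases h2 : c < max i j
      · exact ⟨⟨c - 1, by omega⟩, by simp only; split_ifs <;> omega⟩
      · exact ⟨⟨c - 2, by omega⟩, by simp only; split_ifs <;> omega⟩

lemma sum_hlTerm_tail_eq_zetaP_HL (n : ℕ) (lam : Fin n → ℕ) (σ : Perm (Fin (n + 2))) :
    ∑ ρ : Perm (Fin n), hlTerm n lam (fun k => σ (ρ k).succ.succ) =
      zetaP (σ 0) (σ 1) (HL n lam) := by
  have hu : Injective fun k => (σ k : ℕ) := Fin.val_injective.comp σ.injective
  have hu' : Injective fun k : Fin (n + 1) => (σ k.succ : ℕ) := hu.comp (Fin.succ_injective _)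
  have hσ : (σ 0 : ℕ) ≠ σ 1 := hu.ne Fin.zero_ne_one
  rw [zetaP_HL]
  exact sum_perm_comp_eq_of_image_eq (hlTerm n lam) (u := fun k => σ k.succ.succ)
    (v := fun k => shiftNat (max (σ 0 : ℕ) (σ 1)) (shiftNat (min (σ 0 : ℕ) (σ 1)) k))
    (hu'.comp (Fin.succ_injective _))
    ((shiftNat_inj _).comp ((shiftNat_inj _).comp Fin.val_injective)) (by
      rw [image_shiftNat_shiftNat hσ (σ 0).isLt (σ 1).isLt, image_comp_succ hu',
        image_comp_succ hu, image_val_perm, Fin.succ_zero_eq_one])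

lemma sum_swap_zero_succ {M : Type*} [AddCommGroup M] {n : ℕ} (i : Fin (n + 1)) (g : ℕ → M) :
    ∑ j : Fin n, g (swap 0 i j.succ) = ∑ j ∈ (range (n + 1)).erase (i : ℕ), g j := by
  rw [sum_erase_eq_sub (mem_range.2 i.isLt), sum_range,
    ← Equiv.sum_comp (swap 0 i) fun j => g j, Fin.sum_univ_succ, swap_apply_left,
    add_sub_cancel_left]

theorem hall_littlewood_two_row_expansion_general (m : ℕ) (κ : Fin (m + 3) → ℕ) :
    HL (m + 3) κ =
      ∑ i ∈ Finset.range (m + 3), ∑ j ∈ (Finset.range (m + 3)).erase i,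
        x i ^ κ 0 * x j ^ κ 1 *
        (∏ a ∈ (Finset.range (m + 3)).erase i, (x i - t * x a) / (x i - x a)) *
        (∏ a ∈ ((Finset.range (m + 3)).erase i).erase j, (x j - t * x a) / (x j - x a)) *
        zetaP i j (HL (m + 1) (fun l => κ l.succ.succ)) := by
  simp only [HL_eq_sum_hlTerm (m + 3), hlTerm_perm_split_two_rows]
  rw [← Equiv.sum_comp Perm.decomposeFin.symm, Fintype.sum_prod_type, sum_range]
  refine sum_congr rfl fun i _ => ?_
  rw [← Equiv.sum_comp Perm.decomposeFin.symm, Fintype.sum_prod_type, ← sum_swap_zero_succ i]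
  refine sum_congr rfl fun j _ => ?_
  -- on `Fin.succ (Fin.succ k)`, the permutation with data `(i, j, ρ)` is the one with data
  -- `(i, j, 1)` evaluated at `Fin.succ (Fin.succ (ρ k))`
  have tail := sum_hlTerm_tail_eq_zetaP_HL (m + 1) (fun l => κ l.succ.succ)
    (Perm.decomposeFin.symm (i, Perm.decomposeFin.symm (j, 1)))
  simp only [Perm.decomposeFin_symm_apply_zero, Perm.decomposeFin_symm_apply_one,
    Perm.decomposeFin_symm_apply_succ, Perm.one_apply] at tail ⊢
  rw [← mul_sum, tail]

/-- **Lemma (recursive expansion, two rows).** For a weakly decreasing tuple `κ`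
of length `m > 2`, with `κ'' = (κ_3, …, κ_m)`:
`P_κ(x;t) = Σ_{i≠j} x_i^{κ_1} x_j^{κ_2} ∏_{a≠i}(x_i-t x_a)/(x_i-x_a)
  ∏_{a≠i,j}(x_j-t x_a)/(x_j-x_a) ζ_{i,j}(P_{κ''}(x;t))`. -/
theorem hall_littlewood_two_row_expansion (m : ℕ) (κ : Fin (m + 3) → ℕ)
    (hκ : ∀ i j : Fin (m + 3), i ≤ j → κ j ≤ κ i) :
    HL (m + 3) κ =
      ∑ i ∈ Finset.range (m + 3), ∑ j ∈ (Finset.range (m + 3)).erase i,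
        x i ^ κ 0 * x j ^ κ 1 *
        (∏ a ∈ (Finset.range (m + 3)).erase i, (x i - t * x a) / (x i - x a)) *
        (∏ a ∈ ((Finset.range (m + 3)).erase i).erase j, (x j - t * x a) / (x j - x a)) *
        zetaP i j (HL (m + 1) (fun l => κ l.succ.succ)) :=
  hall_littlewood_two_row_expansion_general m κ

end
end

section
/- Let λ be a weakly decreasing tuple of nonnegative integers of length n > 2, λ'' = (λ_3,…,λ_n), α = λ + ρ_n, α'' = (α_3,…,α_n), and let u, v be nonnegative integers. Assume the inductive hypothesis: P_{λ''}(x;t) · ∏_{a=2}^{n−2}(x_1 − q x_a) = Σ_{μ ∈ GT_2(α'')} M(α'';μ) · x_1^{|α''|−|μ|} · ζ(P_{μ−ρ_{n−3}}(x;t)). Then Σ_{μ ∈ GT_2(α'')} M(α'';μ) · x_1^{|α''|−|μ|} · ζ(P_{(u,v)⌢(μ−ρ_{n−3})}(x;t)) = Σ_{i=2}^n Σ_{2≤j≤n, j≠i} x_i^u x_j^v · ∏_{2≤a≤n, a≠i}(x_i − t x_a)/(x_i − x_a) · ∏_{2≤a≤n, a≠i,j}(x_j − t x_a)/(x_j −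 x_a) · ζ_{i,j}(P_{λ''}(x;t)) · ∏_{2≤a≤n, a≠i,j}(x_1 − q x_a), where (u,v)⌢ν denotes the concatenation of (u,v) with the tuple ν. -/
open MvPolynomial Finset

noncomputable section

/-! Applying the branching rule
`P_{u⌢ν} = Σ_p x_p^u ∏_{a ≠ p} (x_p - t x_a)/(x_p - x_a) · ζ_p(P_ν)` twice, and moving `ζ` to
the right with `ζ_i ζ_j = ζ_{j+1} ζ_i` (`i ≤ j`), writes `ζ(P_{(u,v)⌢(μ-ρ)})` as a sum over
ordered pairs `i ≠ j` in `{2,…,n}` of explicit rational factors times `ζ_{i,j}(ζ(P_{μ-ρ}))`.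
After exchanging the sums, the sum over `μ` is the image of the inductive hypothesis under
`ζ_{i,j}`, which fixes `q`, `t` and `x_1`, hence every coefficient `M(α'';μ)`. -/

lemma subF_X (g : Fin 2 ⊕ ℕ → Fin 2 ⊕ ℕ) (hg : Function.Injective g) (v : Fin 2 ⊕ ℕ) :
    subF g hg (algebraMap Rr F (X v)) = algebraMap Rr F (X (g v)) := by
  rw [subF, IsFractionRing.lift_algebraMap, AlgHom.toRingHom_eq_coe, RingHom.comp_apply,
    RingHom.coe_coe, rename_X]

lemma ringHom_ext_of_q_t_x {φ ψ : F →+* F} (hq : φ q = ψ q) (ht : φ t = ψ t)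
    (hx : ∀ k, φ (x k) = ψ (x k)) : φ = ψ := by
  refine IsLocalization.ringHom_ext (nonZeroDivisors Rr) (MvPolynomial.ringHom_ext ?_ ?_)
  · intro r
    exact RingHom.congr_fun (RingHom.ext_rat ((φ.comp (algebraMap Rr F)).comp C)
      ((ψ.comp (algebraMap Rr F)).comp C)) r
  · rintro (v | k)
    · fin_cases v
      exacts [hq, ht]
    · exact hx k

lemma pact_x (n : ℕ) (σ : Equiv.Perm (Fin n)) (k : Fin n) : pact n σ (x k) = x (σ k) := by
  rw [pact, x, subF_X, Sum.map_inr, permNat, dif_pos k.isLt]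
  rfl

lemma pact_t (n : ℕ) (σ : Equiv.Perm (Fin n)) : pact n σ t = t := subF_X _ _ _

lemma zeta_x (i k : ℕ) : zeta i (x k) = x (shiftNat i k) := subF_X _ _ _

lemma zeta_q (i : ℕ) : zeta i q = q := subF_X _ _ _

lemma zeta_t (i : ℕ) : zeta i t = t := subF_X _ _ _

lemma zeta_comp_zeta_of_le {i j : ℕ} (hij : i ≤ j) :
    (zeta i).comp (zeta j) = (zeta (j + 1)).comp (zeta i) := by
  refine ringHom_ext_of_q_t_x ?_ ?_ fun k => ?_ <;>
    simp only [RingHom.comp_apply, zeta_q, zeta_t, zeta_x]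
  congr 1
  simp only [shiftNat]
  split_ifs <;> omega

lemma zeta_zeta_eq_zetaP (i j : ℕ) (y : F) : zeta i (zeta j y) = zetaP i (shiftNat i j) y := by
  rcases lt_or_ge j i with hji | hij
  · rw [zetaP, shiftNat, if_pos hji, max_eq_left hji.le, min_eq_right hji.le]
    rfl
  · rw [zetaP, shiftNat, if_neg hij.not_gt, max_eq_right (by omega), min_eq_left (by omega),
      ← zeta_comp_zeta_of_le hij]
    rfl

lemma zetaP_x (i j k : ℕ) :
    zetaP i j (x k) = x (shiftNat (max i j) (shiftNat (min i j) k)) := by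
  rw [zetaP, RingHom.comp_apply, zeta_x, zeta_x]

lemma zetaP_q (i j : ℕ) : zetaP i j q = q := by rw [zetaP, RingHom.comp_apply, zeta_q, zeta_q]

lemma zetaP_t (i j : ℕ) : zetaP i j t = t := by rw [zetaP, RingHom.comp_apply, zeta_t, zeta_t]

section Coefficients

variable {φ : F →+* F}

lemma map_GLw (hq : φ q = q) (ht : φ t = t) (y a : ℕ) : φ (GLw y a) = GLw y a := by
  rw [GLw]; split_ifs <;> simp [hq, ht]

lemma map_GRw (hq : φ q = q) (ht : φ t = t) (y b : ℕ) : φ (GRw y b) = GRw y b := by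
  rw [GRw]; split_ifs <;> simp [hq, ht]

lemma map_wgt (hq : φ q = q) (ht : φ t = t) (a1 a2 y : ℕ) : φ (wgt a1 a2 y) = wgt a1 a2 y := by
  rw [wgt, map_add, map_add, map_GLw hq ht, map_GRw hq ht]
  split_ifs <;> simp [hq, ht]

lemma map_Mdet (hq : φ q = q) (ht : φ t = t) (n : ℕ) (α : Fin (n + 1) → ℕ) (μ : Fin n → ℕ) :
    φ (Mdet n α μ) = Mdet n α μ := by
  rw [Mdet, RingHom.map_det]
  congr 1
  ext i j
  simp only [RingHom.mapMatrix_apply, Matrix.map_apply, Matrix.of_apply, apply_ite φ, map_one,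
    map_zero, map_mul, map_wgt hq ht, map_GRw hq ht, map_GLw hq ht]

end Coefficients

def insertPerm {n : ℕ} (p : Fin (n + 1)) (τ : Equiv.Perm (Fin n)) : Equiv.Perm (Fin (n + 1)) :=
  p.cycleRange.symm * Equiv.Perm.decomposeFin.symm (0, τ)

@[simp] lemma insertPerm_zero {n : ℕ} (p : Fin (n + 1)) (τ : Equiv.Perm (Fin n)) :
    insertPerm p τ 0 = p := by
  simp [insertPerm]

@[simp] lemma insertPerm_succ {n : ℕ} (p : Fin (n + 1)) (τ : Equiv.Perm (Fin n)) (k : Fin n) :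
    insertPerm p τ k.succ = p.succAbove (τ k) := by
  simp [insertPerm]

lemma insertPerm_bijective (n : ℕ) :
    Function.Bijective (fun pτ : Fin (n + 1) × Equiv.Perm (Fin n) => insertPerm pτ.1 pτ.2) := by
  refine (Fintype.bijective_iff_injective_and_card _).2 ⟨?_, by
    simp [Fintype.card_perm, Nat.factorial_succ]⟩
  rintro ⟨p, τ⟩ ⟨p', τ'⟩ h
  obtain rfl : p = p' := by simpa using congrArg (fun σ : Equiv.Perm _ => σ 0) h
  refine Prod.ext rfl (Equiv.ext fun k => Fin.succAbove_right_injective (p := p) ?_)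
  simpa using congrArg (fun σ : Equiv.Perm _ => σ k.succ) h

lemma val_succAbove {n : ℕ} (p : Fin (n + 1)) (k : Fin n) :
    (p.succAbove k).val = shiftNat p.val k.val := by
  rw [Fin.succAbove, shiftNat]
  split_ifs with h1 h2 h2 <;> simp_all [Fin.lt_def]

lemma prod_erase_eq_prod_succAbove {M : Type*} [CommMonoid M] {n : ℕ} (p : Fin (n + 1))
    (f : Fin (n + 1) → M) : ∏ a ∈ Finset.univ.erase p, f a = ∏ i : Fin n, f (p.succAbove i) := by
  rw [← Finset.compl_singleton, ← Fin.image_succAbove_univ,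
    Finset.prod_image fun _ _ _ _ h => Fin.succAbove_right_injective h]

lemma HL_cons (n u : ℕ) (ν : Fin n → ℕ) :
    HL (n + 1) (Fin.cons u ν) =
      ∑ p : Fin (n + 1), x p.val ^ u *
        (∏ a ∈ Finset.univ.erase p, (x p.val - t * x a.val) / (x p.val - x a.val)) *
        zeta p.val (HL n ν) := by
  rw [HL, ← (Equiv.ofBijective _ (insertPerm_bijective n)).sum_comp, Fintype.sum_prod_type]
  refine Finset.sum_congr rfl fun p _ => ?_
  rw [HL, map_sum, Finset.mul_sum]
  refine Finset.sum_congr rfl fun τ _ => ?_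
  simp only [Equiv.ofBijective_apply, map_mul, map_prod, map_pow, map_div₀, map_sub, pact_x,
    pact_t, zeta_x, zeta_t]
  rw [Fin.prod_univ_succ, Fin.prod_univ_succ, Fin.prod_Ioi_zero]
  simp only [insertPerm_zero, insertPerm_succ, Fin.cons_zero, Fin.cons_succ, Fin.prod_Ioi_succ,
    prod_erase_eq_prod_succAbove p fun a => (x p.val - t * x a.val) / (x p.val - x a.val)]
  rw [← Equiv.prod_comp τ
    (fun j => (x p.val - t * x (p.succAbove j).val) / (x p.val - x (p.succAbove j).val))]
  simp only [val_succAbove]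
  ring

lemma image_val_add_one_univ (k : ℕ) :
    (Finset.univ : Finset (Fin k)).image (fun a => a.val + 1) = Finset.Icc 1 k := by
  ext b
  simp only [Finset.mem_image, Finset.mem_univ, true_and, Finset.mem_Icc]
  exact ⟨by rintro ⟨a, rfl⟩; omega, fun hb => ⟨⟨b - 1, by omega⟩, by simp; omega⟩⟩

lemma image_shiftNat_Icc {n i : ℕ} (hi : i ∈ Finset.Icc 1 (n + 1)) :
    (Finset.Icc 1 n).image (shiftNat i) = (Finset.Icc 1 (n + 1)).erase i := by
  rw [Finset.mem_Icc] at hi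
  ext b
  simp only [Finset.mem_image, Finset.mem_erase, Finset.mem_Icc, shiftNat]
  constructor
  · rintro ⟨a, ha, rfl⟩
    split_ifs <;> omega
  · intro hb
    exact ⟨if b < i then b else b - 1, by split_ifs <;> omega, by split_ifs <;> omega⟩

lemma zeta_zero_HL_cons (n u : ℕ) (ν : Fin n → ℕ) :
    zeta 0 (HL (n + 1) (Fin.cons u ν)) =
      ∑ i ∈ Finset.Icc 1 (n + 1), x i ^ u *
        (∏ a ∈ (Finset.Icc 1 (n + 1)).erase i, (x i - t * x a) / (x i - x a)) *
        zeta i (zeta 0 (HL n ν)) := by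
  have hinj : Function.Injective fun a : Fin (n + 1) => a.val + 1 :=
    fun a b h => Fin.ext (by simpa using h)
  rw [HL_cons, map_sum, ← image_val_add_one_univ, Finset.sum_image fun a _ b _ h => hinj h]
  refine Finset.sum_congr rfl fun p _ => ?_
  rw [← Finset.image_erase hinj, Finset.prod_image fun a _ b _ h => hinj h,
    ← RingHom.comp_apply (zeta (p.val + 1)), ← zeta_comp_zeta_of_le (Nat.zero_le _)]
  simp only [map_mul, map_pow, map_prod, map_div₀, map_sub, zeta_x, zeta_t, RingHom.comp_apply]
  simp [shiftNat]

lemma zeta_zero_HL_cons_cons (n u v : ℕ) (ν : Fin n → ℕ) :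
    zeta 0 (HL (n + 2) (Fin.cons u (Fin.cons v ν))) =
      ∑ i ∈ Finset.Icc 1 (n + 2), ∑ j ∈ (Finset.Icc 1 (n + 2)).erase i,
        x i ^ u * x j ^ v *
        (∏ a ∈ (Finset.Icc 1 (n + 2)).erase i, (x i - t * x a) / (x i - x a)) *
        (∏ a ∈ ((Finset.Icc 1 (n + 2)).erase i).erase j, (x j - t * x a) / (x j - x a)) *
        zetaP i j (zeta 0 (HL n ν)) := by
  rw [zeta_zero_HL_cons]
  refine Finset.sum_congr rfl fun i hi => ?_
  rw [zeta_zero_HL_cons, map_sum, Finset.mul_sum, ← image_shiftNat_Icc hi,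
    Finset.sum_image fun a _ b _ h => shiftNat_inj i h]
  refine Finset.sum_congr rfl fun j _ => ?_
  rw [← Finset.image_erase (shiftNat_inj i),
    Finset.prod_image (s := (Finset.Icc 1 (n + 1)).erase j) fun a _ b _ h => shiftNat_inj i h]
  simp only [map_mul, map_pow, map_prod, map_div₀, map_sub, zeta_x, zeta_t, zeta_zeta_eq_zetaP i j]
  ring

lemma image_Icc_zetaP_index {m i j : ℕ} (hi : i ∈ Finset.Icc 1 (m + 2))
    (hj : j ∈ (Finset.Icc 1 (m + 2)).erase i) :
    (Finset.Icc 1 m).image (fun a => shiftNat (max i j) (shiftNat (min i j) a)) =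
      ((Finset.Icc 1 (m + 2)).erase i).erase j := by
  simp only [Finset.mem_erase, Finset.mem_Icc] at hi hj
  change (Finset.Icc 1 m).image (shiftNat (max i j) ∘ shiftNat (min i j)) = _
  rw [← Finset.image_image, image_shiftNat_Icc (Finset.mem_Icc.2 (by omega)),
    Finset.image_erase (shiftNat_inj _), image_shiftNat_Icc (Finset.mem_Icc.2 (by omega)),
    shiftNat, if_pos (by omega)]
  rcases le_total i j with h | h
  · rw [max_eq_right h, min_eq_left h, Finset.erase_right_comm]
  · rw [max_eq_left h, min_eq_right h]

lemma sum_Mdet_mul_zetaP {m : ℕ} {α : Fin (m + 1) → ℕ} {P : F}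
    (IH : P * ∏ a ∈ Finset.Icc 1 m, (x 0 - q * x a) =
      ∑ μ ∈ GT2 m α, Mdet m α μ * x 0 ^ (tot α - tot μ) * zeta 0 (HL m (fun i => μ i - rho m i)))
    {i j : ℕ} (hi : i ∈ Finset.Icc 1 (m + 2)) (hj : j ∈ (Finset.Icc 1 (m + 2)).erase i) :
    ∑ μ ∈ GT2 m α, Mdet m α μ * x 0 ^ (tot α - tot μ) *
        zetaP i j (zeta 0 (HL m (fun i => μ i - rho m i))) =
      zetaP i j P * ∏ a ∈ ((Finset.Icc 1 (m + 2)).erase i).erase j, (x 0 - q * x a) := by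
  have hx0 : zetaP i j (x 0) = x 0 := by
    simp only [Finset.mem_erase, Finset.mem_Icc] at hi hj
    rw [zetaP_x]
    congr 1
    simp only [shiftNat]
    split_ifs <;> omega
  rw [← image_Icc_zetaP_index hi hj, Finset.prod_image fun a _ b _ h =>
    shiftNat_inj _ (shiftNat_inj _ h)]
  have := congrArg (zetaP i j) IH
  simp only [map_mul, map_sum, map_pow, map_prod, map_sub, map_Mdet (zetaP_q i j) (zetaP_t i j),
    hx0, zetaP_q, zetaP_x] at this
  exact this.symm

theorem lemma_GT2_general (m : ℕ) (lam : Fin (m + 3) → ℕ) (u v : ℕ)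
    (IH : HL (m + 1) (fun j => lam j.succ.succ) * ∏ a ∈ Finset.Icc 1 m, (x 0 - q * x a) =
      ∑ μ ∈ GT2 m (fun i => lam i.succ.succ + rho (m + 3) i.succ.succ),
        Mdet m (fun i => lam i.succ.succ + rho (m + 3) i.succ.succ) μ *
          x 0 ^ (tot (fun i : Fin (m + 1) => lam i.succ.succ + rho (m + 3) i.succ.succ) - tot μ) *
          zeta 0 (HL m (fun i => μ i - rho m i))) :
    ∑ μ ∈ GT2 m (fun i => lam i.succ.succ + rho (m + 3) i.succ.succ),
        Mdet m (fun i => lam i.succ.succ + rho (m + 3) i.succ.succ) μ *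
          x 0 ^ (tot (fun i : Fin (m + 1) => lam i.succ.succ + rho (m + 3) i.succ.succ) - tot μ) *
          zeta 0 (HL (m + 2) (Fin.cons u (Fin.cons v (fun i => μ i - rho m i)))) =
      ∑ i ∈ Finset.Icc 1 (m + 2), ∑ j ∈ (Finset.Icc 1 (m + 2)).erase i,
        x i ^ u * x j ^ v *
        (∏ a ∈ (Finset.Icc 1 (m + 2)).erase i, (x i - t * x a) / (x i - x a)) *
        (∏ a ∈ ((Finset.Icc 1 (m + 2)).erase i).erase j, (x j - t * x a) / (x j - x a)) *
        zetaP i j (HL (m + 1) (fun l => lam l.succ.succ)) *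
        ∏ a ∈ ((Finset.Icc 1 (m + 2)).erase i).erase j, (x 0 - q * x a) := by
  simp_rw [zeta_zero_HL_cons_cons, Finset.mul_sum]
  rw [Finset.sum_comm]
  refine Finset.sum_congr rfl fun i hi => ?_
  rw [Finset.sum_comm]
  refine Finset.sum_congr rfl fun j hj => ?_
  rw [mul_assoc _ (zetaP i j _), ← sum_Mdet_mul_zetaP IH hi hj, Finset.mul_sum]
  exact Finset.sum_congr rfl fun μ _ => by ring

/-- **Lemma 4, equation (GT2).** With `λ'' = (λ_3,…,λ_n)`, `α'' = (α_3,…,α_n)`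
(where `α = λ + ρ_n`), assuming the inductive hypothesis, one has
`F_{λ''}(u,v) = Σ_{2≤i≠j≤n} x_i^u x_j^v ∏_{2≤a≤n,a≠i}(x_i-t x_a)/(x_i-x_a)
  ∏_{2≤a≤n,a≠i,j}(x_j-t x_a)/(x_j-x_a) ζ_{i,j}(P_{λ''}) ∏_{2≤a≤n,a≠i,j}(x_1-q x_a)`. -/
theorem lemma_GT2 (m : ℕ) (lam : Fin (m + 3) → ℕ)
    (hlam : ∀ i j : Fin (m + 3), i ≤ j → lam j ≤ lam i) (u v : ℕ)
    (IH : HL (m + 1) (fun j => lam j.succ.succ) * ∏ a ∈ Finset.Icc 1 m, (x 0 - q * x a) =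
      ∑ μ ∈ GT2 m (fun i => lam i.succ.succ + rho (m + 3) i.succ.succ),
        Mdet m (fun i => lam i.succ.succ + rho (m + 3) i.succ.succ) μ *
          x 0 ^ (tot (fun i : Fin (m + 1) => lam i.succ.succ + rho (m + 3) i.succ.succ) - tot μ) *
          zeta 0 (HL m (fun i => μ i - rho m i))) :
    ∑ μ ∈ GT2 m (fun i => lam i.succ.succ + rho (m + 3) i.succ.succ),
        Mdet m (fun i => lam i.succ.succ + rho (m + 3) i.succ.succ) μ *
          x 0 ^ (tot (fun i : Fin (m + 1) => lam i.succ.succ + rho (m + 3) i.succ.succ) - tot μ) *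
          zeta 0 (HL (m + 2) (Fin.cons u (Fin.cons v (fun i => μ i - rho m i)))) =
      ∑ i ∈ Finset.Icc 1 (m + 2), ∑ j ∈ (Finset.Icc 1 (m + 2)).erase i,
        x i ^ u * x j ^ v *
        (∏ a ∈ (Finset.Icc 1 (m + 2)).erase i, (x i - t * x a) / (x i - x a)) *
        (∏ a ∈ ((Finset.Icc 1 (m + 2)).erase i).erase j, (x j - t * x a) / (x j - x a)) *
        zetaP i j (HL (m + 1) (fun l => lam l.succ.succ)) *
        ∏ a ∈ ((Finset.Icc 1 (m + 2)).erase i).erase j, (x 0 - q * x a) :=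
  lemma_GT2_general m lam u v IH

end
end

section
/- Let λ_1 ≥ λ_2 ≥ 0 be integers. Then, in the polynomial ring ℤ[q,t,u,v], (u − q v) · ((v − t u)·v^{λ_1} − (u − t v)·u^{λ_1−λ_2}·v^{λ_2}) = (v − u) · ( −q·v^{λ_1+1} + t·u·v^{λ_1} − q t·u^{λ_1−λ_2}·v^{λ_2+1} + u^{λ_1−λ_2+1}·v^{λ_2} + Σ_{k=λ_2+1}^{λ_1} (1−q)(1−t)·u^{λ_1+1−k}·v^{k} ). -/
open MvPolynomial Finset

noncomputable section

/-- The polynomial ring `ℤ[q, t, u, v]`. -/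
abbrev A14 : Type := MvPolynomial (Fin 4) ℤ

def q14 : A14 := X 0
def t14 : A14 := X 1
def u14 : A14 := X 2
def v14 : A14 := X 3

/-- **The `Q_i` identity.** For integers `λ_1 ≥ λ_2 ≥ 0`, in `ℤ[q,t,u,v]`:
`(u - q v)((v - t u) v^{λ_1} - (u - t v) u^{λ_1-λ_2} v^{λ_2})
 = (v - u)(-q v^{λ_1+1} + t u v^{λ_1} - q t u^{λ_1-λ_2} v^{λ_2+1} + u^{λ_1-λ_2+1} v^{λ_2}
    + Σ_{k=λ_2+1}^{λ_1} (1-q)(1-t) u^{λ_1+1-k} v^k)`. -/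
theorem Q_identity (l1 l2 : ℕ) (h : l2 ≤ l1) :
    (u14 - q14 * v14) *
        ((v14 - t14 * u14) * v14 ^ l1 - (u14 - t14 * v14) * u14 ^ (l1 - l2) * v14 ^ l2) =
      (v14 - u14) *
        (-(q14 * v14 ^ (l1 + 1)) + t14 * u14 * v14 ^ l1 -
          q14 * t14 * u14 ^ (l1 - l2) * v14 ^ (l2 + 1) +
          u14 ^ (l1 - l2 + 1) * v14 ^ l2 +
          ∑ k ∈ Finset.Icc (l2 + 1) l1,
            (1 - q14) * (1 - t14) * u14 ^ (l1 + 1 - k) * v14 ^ k) := by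
  obtain ⟨d, rfl⟩ := Nat.exists_eq_add_of_le h
  clear h
  induction d with
  | zero => simp; ring
  | succ d ih =>
    have ih' := ih
    rw [show l2 + d - l2 = d from by omega] at ih'
    have h1 : l2 + 1 ≤ l2 + d + 1 := by omega
    rw [show Finset.Icc (l2 + 1) (l2 + (d + 1)) = Finset.Icc (l2+1) (l2+d+1) from by congr 1,
      Finset.sum_Icc_succ_top h1,
      show l2 + (d+1) - l2 = d + 1 from by omega,
      show l2 + (d+1) + 1 - (l2 + d + 1) = 1 from by omega]
    have hsum : ∑ k ∈ Finset.Icc (l2 + 1) (l2 + d), (1 - q14) * (1 - t14) *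
        u14 ^ (l2 + (d + 1) + 1 - k) * v14 ^ k
        = u14 * ∑ k ∈ Finset.Icc (l2 + 1) (l2 + d), (1 - q14) * (1 - t14) *
            u14 ^ (l2 + d + 1 - k) * v14 ^ k := by
      rw [Finset.mul_sum]
      refine Finset.sum_congr rfl fun k hk => ?_
      simp only [Finset.mem_Icc] at hk
      rw [show l2 + (d + 1) + 1 - k = (l2 + d + 1 - k) + 1 from by omega, pow_succ]; ring
    rw [hsum]
    linear_combination u14 * ih'

end
end
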